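/- Let w be an infinite non-ultimately periodic word and u ∈ Π_γ(w). If i ≤ j, w[i,j] is a palindrome, and w[i,j] contains no centered standard palindrome (i.e., CnStdPal_{w,u}(i,j) = ∅), then the number of u-runs entirely contained in [i,j] is at most 2. -/

import Mathlib

open scoped BigOperators

variable {α : Type*}

/-- The factor of the infinite word `w` (1-indexed) from position `i` to position `j`. -/
def Subword (w : ℕ → α) (i j : ℕ) : List α :=
  (List.range (j + 1 - i)).map fun n => w (i + n)

/-- `t` is a finite factor of the infinite word `w` (positions are 1-indexed). -/
def IsFactorI (w : ℕ → α) (t : List α) : Prop :=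
  ∃ i, 1 ≤ i ∧ t = (List.range t.length).map fun n => w (i + n)

/-- `t` occurs infinitely often in the infinite word `w`. -/
def RecurrentI (w : ℕ → α) (t : List α) : Prop :=
  ∀ N, ∃ i, N ≤ i ∧ t = (List.range t.length).map fun n => w (i + n)

/-- The infinite word `w` is ultimately periodic. -/
def UltimatelyPeriodic (w : ℕ → α) : Prop :=
  ∃ p N, 1 ≤ p ∧ ∀ n, N ≤ n → w (n + p) = w n

/-- The `q`-power `u^q` of a finite word `u`, for a rational exponent `q ≥ 1`:
`u^⌊q⌋` followed by the prefix of `u` of length `(q - ⌊q⌋)·|u|`. -/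
def fracPow (u : List α) (q : ℚ) : List α :=
  (List.replicate ⌊q⌋.toNat u).flatten ++
    u.take (⌊q * (u.length : ℚ)⌋.toNat - ⌊q⌋.toNat * u.length)

/-- A nonempty word is primitive if it is not a (possibly fractional) `q`-power,
`q ≥ 2`, of any word. -/
def Primitive (v : List α) : Prop :=
  v ≠ [] ∧ ∀ (t : List α) (q : ℚ), 2 ≤ q → v ≠ fracPow t q

/-- `PowFactor u`: finite factors of `u^∞` together with finite factors of `(u^R)^∞`. -/
def IsPowFactor (u t : List α) : Prop :=
  (∃ k, t <:+: (List.replicate k u).flatten) ∨ (∃ k, t <:+: (List.replicate k u.reverse).flatten)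

/-- `(i,j)` is a `u`-run of the infinite word `w` (with the fixed parameter `γ`). -/
def IsRun (γ : ℕ) (w : ℕ → α) (u : List α) (i j : ℕ) : Prop :=
  i < j ∧ (γ - 2) * u.length ≤ j - i + 1 ∧ u.length + 1 < i ∧
  IsPowFactor u (Subword w (i - u.length) (j + u.length)) ∧
  ¬ IsPowFactor u (Subword w (i - u.length - 1) (j + u.length)) ∧
  ¬ IsPowFactor u (Subword w (i - u.length) (j + u.length + 1))

/-- Membership in the set `Π_γ(w)`. -/
def InPi (γ : ℕ) (w : ℕ → α) (u : List α) : Prop :=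
  Primitive u ∧ IsFactorI w u ∧
  ¬ IsPowFactor u ((List.range (γ * u.length)).map fun n => w (1 + n)) ∧
  ∃ v : List α, v.length = u.length ∧ IsPowFactor u v ∧
    RecurrentI w ((List.replicate γ v).flatten)

/-- Palindromic length: the minimal number of nonempty palindromes whose
concatenation equals `v`. -/
noncomputable def PL (v : List α) : ℕ :=
  sInf {k | ∃ ps : List (List α), ps.flatten = v ∧ ps.length = k ∧
    ∀ p ∈ ps, p ≠ [] ∧ p.reverse = p}

/-- `maxPL v`: the maximum of `PL` over the factors of `v`. -/
noncomputable def maxPL (v : List α) : ℕ :=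
  sSup {n | ∃ t, t <:+: v ∧ n = PL t}

/-- `(I, J, W, Z, D)` is the run factorization `factrz(w,u)` of `w`:
`(I k, J k)` enumerates the `u`-runs in increasing order, `W k` is the inter-run
factor, and `w[I k, J k] = (Z k)^(D k)`. -/
structure IsFactrz (γ : ℕ) (w : ℕ → α) (u : List α)
    (I J : ℕ → ℕ) (W Z : ℕ → List α) (D : ℕ → ℚ) : Prop where
  run : ∀ k, 1 ≤ k → IsRun γ w u (I k) (J k)
  mono : ∀ k, 1 ≤ k → I k < I (k + 1)
  complete : ∀ i j, IsRun γ w u i j → ∃ k, 1 ≤ k ∧ I k = i ∧ J k = j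
  j0 : J 0 = 0
  wdef : ∀ k, 1 ≤ k → W k = Subword w (J (k - 1) + 1) (I k - 1)
  zlen : ∀ k, 1 ≤ k → (Z k).length = u.length
  zpow : ∀ k, 1 ≤ k → IsPowFactor u (Z k)
  dge : ∀ k, 1 ≤ k → 1 ≤ D k
  zd : ∀ k, 1 ≤ k → Subword w (I k) (J k) = fracPow (Z k) (D k)

/-- Membership in `Φ_h` (with fixed parameter `γ`). -/
def InPhi (γ h : ℕ) (φ : ℚ → ℚ) : Prop :=
  ∀ q : ℚ, 1 ≤ q → ((γ : ℚ) - 2 ≤ φ q ∧ φ q < (h : ℚ) ∧ ∃ n : ℕ, q - φ q = (n : ℚ))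

/-- The finite prefix `W 1 (Z 1)^(E 1) ⋯ W k (Z k)^(E k)` of the reduced word. -/
def redPrefix (W Z : ℕ → List α) (E : ℕ → ℚ) : ℕ → List α
  | 0 => []
  | k + 1 => redPrefix W Z E k ++ W (k + 1) ++ fracPow (Z (k + 1)) (E (k + 1))

/-- `x` is the reduced word `W 1 (Z 1)^(E 1) W 2 (Z 2)^(E 2) ⋯` (1-indexed). -/
def IsReduce (W Z : ℕ → List α) (E : ℕ → ℚ) (x : ℕ → α) : Prop :=
  ∀ k, redPrefix W Z E k = (List.range (redPrefix W Z E k).length).map fun n => x (1 + n)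

/-- Position `i` of `w` is not covered by any `u`-run. -/
def RpoDom (γ : ℕ) (w : ℕ → α) (u : List α) (i : ℕ) : Prop :=
  1 ≤ i ∧ ∀ a b, IsRun γ w u a b → ¬ (a ≤ i ∧ i ≤ b)

/-- `κ(j) = Σ_{i ≤ j} (|W i| + |(Z i)^(D i)|)`, the end position of the `j`-th run. -/
def kappa (W Z : ℕ → List α) (D : ℕ → ℚ) (j : ℕ) : ℕ :=
  ∑ i ∈ Finset.Icc 1 j, ((W i).length + (fracPow (Z i) (D i)).length)

/-- The graph of the position bijection `rpo`: position `i` of `w` (with exponent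
sequence `D`) corresponds to position `ib` of the reduced word (exponents `E`). -/
def RpoRel (W Z : ℕ → List α) (D E : ℕ → ℚ) (i ib : ℕ) : Prop :=
  ∃ j, kappa W Z D j < i ∧ i ≤ kappa W Z D (j + 1) ∧
    ib = kappa W Z E j + (i - kappa W Z D j)

/-- There are at most `N` `u`-runs entirely contained in `[a,b]`. -/
def RunCountLe (γ : ℕ) (w : ℕ → α) (u : List α) (a b N : ℕ) : Prop :=
  ∀ S : Finset (ℕ × ℕ), (∀ p ∈ S, IsRun γ w u p.1 p.2 ∧ a ≤ p.1 ∧ p.2 ≤ b) → S.card ≤ N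

/-- `(i,j)` is a standard palindrome of `w` with respect to `u`. -/
def IsStdPal (γ : ℕ) (w : ℕ → α) (u : List α) (i j : ℕ) : Prop :=
  i ≤ j ∧ RpoDom γ w u i ∧ RpoDom γ w u j ∧
  (Subword w (i - 1) (j + 1)).reverse = Subword w (i - 1) (j + 1) ∧
  (∀ m, i - 1 ≤ m → m ≤ min (i + u.length - 1) j → RpoDom γ w u m) ∧
  (∀ m, max (j + 1 - u.length) i ≤ m → m ≤ j + 1 → RpoDom γ w u m) ∧
  (∀ m, i ≤ m → m ≤ j → (RpoDom γ w u m ↔ RpoDom γ w u (i + j - m)))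

/-- `(m1,m2)` is a centered standard palindrome of `w[i,j]`. -/
def IsCnStdPal (γ : ℕ) (w : ℕ → α) (u : List α) (i j m1 m2 : ℕ) : Prop :=
  IsStdPal γ w u m1 m2 ∧ i ≤ m1 ∧ m2 ≤ j ∧ m1 - i = j - m2

/-! A palindrome `w[i,j]` maps runs with a margin of `|u| + 2` inside `[i,j]` to runs, and
three distinct runs in `[i,j]` are pairwise separated, so the middle one has such a margin.
If some run straddles the centre of `w[i,j]`, comparing it with its mirror image and using
the maximality of runs shows that it is symmetric; widened by `|u|` on both sides it is a
centred standard palindrome. Otherwise the last run left of the centre and the first run right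
of it are mirror images of each other, and the run-free stretch between them, of length at
least `3`, is a centred standard palindrome. -/

@[simp] lemma length_subword (w : ℕ → α) (p q : ℕ) : (Subword w p q).length = q + 1 - p := by
  simp [Subword]

@[simp] lemma getElem_subword (w : ℕ → α) (p q n : ℕ) (hn : n < (Subword w p q).length) :
    (Subword w p q)[n] = w (p + n) := by
  simp [Subword]

lemma subword_isInfix_subword (w : ℕ → α) {p q p' q' : ℕ} (hp : p ≤ p') (hq : q' ≤ q) :
    Subword w p' q' <:+: Subword w p q := by
  rcases lt_or_ge (q' + 1) p' with hemp | hne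
  · rw [List.eq_nil_of_length_eq_zero (by simp; omega : (Subword w p' q').length = 0)]
    exact List.nil_infix
  rw [List.infix_iff_getElem?]
  refine ⟨p' - p, by simp; omega, fun n hn => ?_⟩
  simp only [length_subword] at hn
  rw [List.getElem?_eq_getElem (by simp; omega), getElem_subword, getElem_subword]
  congr 2
  omega

lemma getElem?_flatten_replicate (v : List α) (k n : ℕ) :
    (List.replicate k v).flatten[n]? = if n < k * v.length then v[n % v.length]? else none := by
  induction k generalizing n with
  | zero => simp
  | succ k ih =>
    rw [List.replicate_succ, List.flatten_cons]
    rcases lt_or_ge n v.length with hn | hn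
    · rw [List.getElem?_append_left hn, if_pos (by nlinarith), Nat.mod_eq_of_lt hn]
    · rw [List.getElem?_append_right hn, ih, ← Nat.mod_eq_sub_mod hn, Nat.succ_mul]
      simp only [Nat.sub_lt_iff_lt_add hn]

/-- `w[p,q]` is a factor of `v^ω`: `w m` is the letter of `v` at position `r + m` mod `|v|`. -/
def IsCyclicOn (w : ℕ → α) (v : List α) (p q : ℕ) : Prop :=
  ∃ r, ∀ m, p ≤ m → m ≤ q → v[(r + m) % v.length]? = some (w m)

lemma exists_isInfix_iff_isCyclicOn {w : ℕ → α} {v : List α} (hv : v ≠ []) (p q : ℕ) :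
    (∃ k, Subword w p q <:+: (List.replicate k v).flatten) ↔ IsCyclicOn w v p q := by
  have hL := List.length_pos_iff.2 hv
  constructor
  · rintro ⟨k, hk⟩
    obtain ⟨s, hlen, hs⟩ := List.infix_iff_getElem?.1 hk
    simp only [length_subword, List.length_flatten, List.map_replicate, List.sum_replicate,
      smul_eq_mul] at hlen
    have hpL : p ≤ v.length * p := Nat.le_mul_of_pos_left p hL
    refine ⟨s + (v.length * p - p), fun m hm hm' => ?_⟩
    have := hs (m - p) (by simp; omega)
    rw [getElem?_flatten_replicate, if_pos (by omega), getElem_subword,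
      show p + (m - p) = m by omega] at this
    rwa [show s + (v.length * p - p) + m = m - p + s + v.length * p by omega,
      Nat.add_mul_mod_self_left]
  · rintro ⟨r, hr⟩
    have hbound : q + 1 - p + (r + p) % v.length ≤ (q + 2) * v.length := by
      have := Nat.mod_lt (r + p) hL
      have : q + 1 - p ≤ q + 1 := Nat.sub_le _ _
      nlinarith
    refine ⟨q + 2, List.infix_iff_getElem?.2
      ⟨(r + p) % v.length, by simpa using hbound, fun n hn => ?_⟩⟩
    rw [length_subword] at hn
    rw [getElem?_flatten_replicate, if_pos (by omega), getElem_subword, Nat.add_mod_mod,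
      ← hr (p + n) (by omega) (by omega)]
    congr 2
    omega

lemma IsCyclicOn.merge {w : ℕ → α} {v₁ v₂ : List α} {p q p' q' : ℕ}
    (h₁ : IsCyclicOn w v₁ p q) (h₂ : IsCyclicOn w v₂ p' q') (hv : v₁ ≠ [])
    (hlen : v₂.length = v₁.length) (hp : p ≤ p') (hov : p' + v₁.length ≤ q + 1) :
    IsCyclicOn w v₁ p q' := by
  obtain ⟨r₁, hr₁⟩ := h₁
  obtain ⟨r₂, hr₂⟩ := h₂
  have hL := List.length_pos_iff.2 hv
  refine ⟨r₁, fun m hm hm' => ?_⟩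
  rcases le_or_gt m q with hmq | hmq
  · exact hr₁ m hm hmq
  -- `w (p' + d)` is read off the overlap at the congruent position `p' + d % |v₁|`
  obtain ⟨d, rfl⟩ : ∃ d, m = p' + d := ⟨m - p', by omega⟩
  have hd := Nat.mod_lt d hL
  have hmod : ∀ r, (r + (p' + d % v₁.length)) % v₁.length = (r + (p' + d)) % v₁.length :=
    fun r => by rw [← add_assoc, ← add_assoc, Nat.add_mod_mod]
  rw [← hmod, hr₁ _ (by omega) (by omega), ← hr₂ _ (by omega) (by omega), hlen, hmod, ← hlen,
    hr₂ _ (by omega) hm']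

lemma isPowFactor_subword_iff {w : ℕ → α} {u : List α} (hu : u ≠ []) (p q : ℕ) :
    IsPowFactor u (Subword w p q) ↔ IsCyclicOn w u p q ∨ IsCyclicOn w u.reverse p q := by
  rw [IsPowFactor, exists_isInfix_iff_isCyclicOn hu,
    exists_isInfix_iff_isCyclicOn (List.reverse_ne_nil_iff.2 hu)]

lemma isPowFactor_singleton_subword_iff {w : ℕ → α} {x : α} {p q : ℕ} :
    IsPowFactor [x] (Subword w p q) ↔ ∀ m, p ≤ m → m ≤ q → w m = x := by
  simp [isPowFactor_subword_iff, IsCyclicOn, Nat.mod_one, eq_comm]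

lemma IsPowFactor.mono {u t t' : List α} (h : IsPowFactor u t) (ht : t' <:+: t) :
    IsPowFactor u t' :=
  h.imp (fun ⟨k, hk⟩ => ⟨k, ht.trans hk⟩) (fun ⟨k, hk⟩ => ⟨k, ht.trans hk⟩)

lemma IsPowFactor.reverse {u t : List α} (h : IsPowFactor u t) : IsPowFactor u t.reverse := by
  have hrev : ∀ (v : List α) k, (List.replicate k v).flatten.reverse =
      (List.replicate k v.reverse).flatten := fun v k => by
    simp [List.reverse_flatten, List.map_replicate, List.reverse_replicate]
  rcases h with ⟨k, hk⟩ | ⟨k, hk⟩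
  · exact Or.inr ⟨k, hrev u k ▸ hk.reverse⟩
  · exact Or.inl ⟨k, by simpa [hrev] using hk.reverse⟩

lemma IsPowFactor.subword_merge {w : ℕ → α} {u : List α} (hu : u ≠ []) {p q p' q' : ℕ}
    (h₁ : IsPowFactor u (Subword w p q)) (h₂ : IsPowFactor u (Subword w p' q'))
    (hp : p ≤ p') (hov : p' + u.length ≤ q + 1) : IsPowFactor u (Subword w p q') := by
  rw [isPowFactor_subword_iff hu] at *
  have hu' : u.reverse ≠ [] := List.reverse_ne_nil_iff.2 hu
  rcases h₁ with h₁ | h₁ <;> rcases h₂ with h₂ | h₂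
  · exact Or.inl (h₁.merge h₂ hu rfl hp hov)
  · exact Or.inl (h₁.merge h₂ hu (List.length_reverse) hp hov)
  · exact Or.inr (h₁.merge h₂ hu' (List.length_reverse).symm hp (by simpa using hov))
  · exact Or.inr (h₁.merge h₂ hu' rfl hp (by simpa using hov))

def IsPalOn (w : ℕ → α) (i j : ℕ) : Prop :=
  ∀ m, i ≤ m → m ≤ j → w m = w (i + j - m)

lemma isPalOn_of_reverse_eq {w : ℕ → α} {i j : ℕ} (h : (Subword w i j).reverse = Subword w i j) :
    IsPalOn w i j := by
  intro m hm hm'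
  have := congrArg (·[m - i]?) h
  simp only [List.getElem?_reverse (by simp; omega : m - i < (Subword w i j).length)] at this
  rw [List.getElem?_eq_getElem (by simp; omega), List.getElem?_eq_getElem (by simp; omega),
    getElem_subword, getElem_subword, length_subword, Option.some_inj,
    show i + (j + 1 - i - 1 - (m - i)) = i + j - m by omega, show i + (m - i) = m by omega] at this
  exact this.symm

lemma IsPalOn.reverse_subword {w : ℕ → α} {i j p q : ℕ} (hw : IsPalOn w i j)
    (hp : i ≤ p) (hpq : p ≤ q) (hq : q ≤ j) :
    (Subword w p q).reverse = Subword w (i + j - q) (i + j - p) := by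
  apply List.ext_getElem (by simp only [List.length_reverse, length_subword]; omega)
  intro n h₁ h₂
  simp only [List.length_reverse, length_subword] at h₁ h₂
  rw [List.getElem_reverse, getElem_subword, getElem_subword, length_subword,
    hw _ (by omega) (by omega)]
  congr 1
  omega

lemma IsPalOn.reverse_subword_eq_self {w : ℕ → α} {i j p q : ℕ} (hw : IsPalOn w i j)
    (hp : i ≤ p) (hpq : p ≤ q) (hc : p + q = i + j) :
    (Subword w p q).reverse = Subword w p q := by
  rw [hw.reverse_subword hp hpq (by omega), show i + j - q = p by omega,
    show i + j - p = q by omega]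

lemma IsPalOn.isPowFactor_subword {w : ℕ → α} {u : List α} {i j p q : ℕ} (hw : IsPalOn w i j)
    (hp : i ≤ p) (hpq : p ≤ q) (hq : q ≤ j) (h : IsPowFactor u (Subword w p q)) :
    IsPowFactor u (Subword w (i + j - q) (i + j - p)) :=
  hw.reverse_subword hp hpq hq ▸ h.reverse

section Runs

variable {γ : ℕ} {w : ℕ → α} {u : List α}

lemma IsRun.not_isPowFactor_left (hu : u ≠ []) {a b p q : ℕ} (h : IsRun γ w u a b)
    (hp : p + u.length + 1 ≤ a) (hq : a ≤ q + 1) : ¬ IsPowFactor u (Subword w p q) := by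
  obtain ⟨-, -, -, hpow, hleft, -⟩ := h
  intro hpq
  exact hleft ((hpq.subword_merge hu hpow (by omega) (by omega)).mono
    (subword_isInfix_subword w (by omega) le_rfl))

lemma IsRun.not_isPowFactor_right (hu : u ≠ []) {a b p q : ℕ} (h : IsRun γ w u a b)
    (hp : p ≤ b + 1) (hq : b + u.length + 1 ≤ q) : ¬ IsPowFactor u (Subword w p q) := by
  obtain ⟨hab, -, -, hpow, -, hright⟩ := h
  intro hpq
  have hpq' := hpq.mono (subword_isInfix_subword w (le_max_left p (a - u.length)) le_rfl)
  exact hright ((hpow.subword_merge hu hpq' (le_max_right _ _) (by omega)).mono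
    (subword_isInfix_subword w le_rfl hq))

lemma IsRun.separated (hu : u ≠ []) {a b a' b' : ℕ} (h : IsRun γ w u a b)
    (h' : IsRun γ w u a' b') (hne : (a, b) ≠ (a', b')) :
    b + u.length + 2 ≤ a' ∨ b' + u.length + 2 ≤ a := by
  by_contra! hcon
  have := h.2.2.1
  have := h'.2.2.1
  rcases lt_trichotomy a a' with haa | rfl | haa
  · exact h'.not_isPowFactor_left hu (by omega) (by omega) h.2.2.2.1
  · rcases lt_trichotomy b b' with hbb | rfl | hbb
    · exact h.not_isPowFactor_right hu (by omega) (by omega) h'.2.2.2.1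
    · exact hne rfl
    · exact h'.not_isPowFactor_right hu (by omega) (by omega) h.2.2.2.1
  · exact h.not_isPowFactor_left hu (by omega) (by omega) h'.2.2.2.1

lemma IsRun.le_iff_le (hu : u ≠ []) {a b a' b' : ℕ} (h : IsRun γ w u a b)
    (h' : IsRun γ w u a' b') : a ≤ a' ↔ b ≤ b' := by
  by_cases hne : (a, b) = (a', b')
  · simp_all
  · have := h.1
    have := h'.1
    rcases h.separated hu h' hne with hs | hs <;> omega

lemma IsRun.add_four_le (hu : u ≠ []) {a b a' b' : ℕ} (h : IsRun γ w u a b)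
    (h' : IsRun γ w u a' b') (hlt : b < a') : b + 4 ≤ a' := by
  have := h.1
  have := h'.1
  have hsep : b + u.length + 2 ≤ a' :=
    (h.separated hu h' (by simp; omega)).resolve_right (by omega)
  rcases Nat.lt_or_ge 1 u.length with hL | hL
  · omega
  -- a one-letter `u` makes both windows constant, and windows at distance 3 would touch
  obtain ⟨x, rfl⟩ :=
    List.length_eq_one_iff.1 (show u.length = 1 by have := List.length_pos_iff.2 hu; omega)
  by_contra! hclose
  have hpow := isPowFactor_singleton_subword_iff.1 h.2.2.2.1
  have hpow' := isPowFactor_singleton_subword_iff.1 h'.2.2.2.1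
  refine h.2.2.2.2.2 (isPowFactor_singleton_subword_iff.2 fun m hm hm' => ?_)
  simp only [List.length_singleton] at hsep hpow hpow' hm hm'
  rcases Nat.lt_or_ge m (b + 2) with hmb | hmb
  · exact hpow m hm (by omega)
  · exact hpow' m (by omega) (by omega)

lemma IsRun.rpoDom_iff (hu : u ≠ []) {a b m : ℕ} (h : IsRun γ w u a b)
    (hm : a - u.length - 1 ≤ m) (hm' : m ≤ b + u.length + 1) :
    RpoDom γ w u m ↔ ¬ (a ≤ m ∧ m ≤ b) := by
  refine ⟨fun hd => hd.2 a b h,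
    fun hcov => ⟨by have := h.2.2.1; omega, fun a' b' h' hcov' => ?_⟩⟩
  have := h.1
  have := h'.1
  by_cases hne : (a', b') = (a, b)
  · simp only [Prod.mk.injEq] at hne
    omega
  · rcases h'.separated hu h hne with hs | hs <;> omega

-- The margins are `|u| + 2` rather than `|u| + 1` so that the mirrored run still starts
-- after position `|u| + 1` when `i = 0`.
lemma IsRun.reflect {i j a b : ℕ} (hw : IsPalOn w i j) (h : IsRun γ w u a b)
    (ha : i + u.length + 2 ≤ a) (hb : b + u.length + 2 ≤ j) :
    IsRun γ w u (i + j - b) (i + j - a) := by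
  obtain ⟨hab, hlen, -, hpow, hleft, hright⟩ := h
  refine ⟨by omega, by rwa [show i + j - a - (i + j - b) = b - a by omega], by omega, ?_,
    fun hc => hright ?_, fun hc => hleft ?_⟩
  · convert hw.isPowFactor_subword (by omega) (by omega) (by omega) hpow using 2 <;> omega
  · convert hw.isPowFactor_subword (by omega) (by omega) (by omega) hc using 2 <;> omega
  · convert hw.isPowFactor_subword (by omega) (by omega) (by omega) hc using 2 <;> omega

lemma IsRun.add_eq_of_straddle (hu : u ≠ []) {i j a b : ℕ} (hw : IsPalOn w i j)
    (h : IsRun γ w u a b) (ha : a ≤ j) (hb : i ≤ b) (hca : 2 * a ≤ i + j) (hcb : i + j ≤ 2 * b)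
    (hm : i + u.length + 1 ≤ a ∨ b + u.length + 1 ≤ j) : a + b = i + j := by
  have := h.1
  have := h.2.2.1
  have hmid : IsPowFactor u (Subword w (max (a - u.length) i) (min (b + u.length) j)) :=
    h.2.2.2.1.mono (subword_isInfix_subword w (le_max_left _ _) (min_le_left _ _))
  have hmir := hw.isPowFactor_subword (le_max_right _ _) (by omega) (min_le_right _ _) hmid
  rcases lt_trichotomy (a + b) (i + j) with hlt | heq | hgt
  · exact absurd hmir (h.not_isPowFactor_right hu (by omega) (by omega))
  · exact heq
  · exact absurd hmir (h.not_isPowFactor_left hu (by omega) (by omega))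

end Runs

section CenteredPalindromes

variable {γ : ℕ} {w : ℕ → α} {u : List α} {i j : ℕ}

lemma isCnStdPal_of_rpoDom {p q : ℕ} (hw : IsPalOn w i j) (hi : i ≤ p) (hpq : p + 2 ≤ q)
    (hc : p + q = i + j) (hdom : ∀ m, p ≤ m → m ≤ q → RpoDom γ w u m) :
    IsCnStdPal γ w u i j (p + 1) (q - 1) := by
  refine ⟨⟨by omega, hdom _ (by omega) (by omega), hdom _ (by omega) (by omega), ?_,
    fun m hm hm' => hdom m (by omega) (by omega), fun m hm hm' => hdom m (by omega) (by omega),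
    fun m hm hm' => iff_of_true (hdom m (by omega) (by omega)) (hdom _ (by omega) (by omega))⟩,
    by omega, by omega, by omega⟩
  rw [show p + 1 - 1 = p by omega, show q - 1 + 1 = q by omega]
  exact hw.reverse_subword_eq_self hi (by omega) hc

lemma isCnStdPal_of_symmetric_run (hu : u ≠ []) {a b : ℕ} (hw : IsPalOn w i j)
    (h : IsRun γ w u a b) (hc : a + b = i + j) (ha : i + u.length + 1 ≤ a) :
    IsCnStdPal γ w u i j (a - u.length) (b + u.length) := by
  have := h.1
  have := h.2.2.1
  have hdom : ∀ m, a - u.length - 1 ≤ m → m ≤ b + u.length + 1 →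
      (RpoDom γ w u m ↔ ¬ (a ≤ m ∧ m ≤ b)) := fun m => h.rpoDom_iff hu
  have hL := List.length_pos_iff.2 hu
  refine ⟨⟨by omega, (hdom _ (by omega) (by omega)).2 (by omega),
    (hdom _ (by omega) (by omega)).2 (by omega), ?_,
    fun m hm hm' => (hdom m (by omega) (by omega)).2 (by omega),
    fun m hm hm' => (hdom m (by omega) (by omega)).2 (by omega),
    fun m hm hm' => ?_⟩, by omega, by omega, by omega⟩
  · exact hw.reverse_subword_eq_self (by omega) (by omega) (by omega)
  · rw [hdom m (by omega) (by omega), hdom _ (by omega) (by omega)]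
    omega

lemma exists_isCnStdPal_of_straddle (hu : u ≠ []) {x y a b : ℕ} (hw : IsPalOn w i j)
    (h : IsRun γ w u x y) (hx : i + u.length + 2 ≤ x) (hy : y + u.length + 2 ≤ j)
    (hq : IsRun γ w u a b) (ha : a ≤ j) (hb : i ≤ b) (hca : 2 * a ≤ i + j)
    (hcb : i + j ≤ 2 * b) : ∃ m₁ m₂, IsCnStdPal γ w u i j m₁ m₂ := by
  have hmargin : i + u.length + 1 ≤ a ∨ b + u.length + 1 ≤ j := by
    have := h.1
    have := hq.1
    by_cases hne : (x, y) = (a, b)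
    · simp only [Prod.mk.injEq] at hne
      omega
    · rcases h.separated hu hq hne with hs | hs <;> omega
  have hc := hq.add_eq_of_straddle hu hw ha hb hca hcb hmargin
  exact ⟨_, _, isCnStdPal_of_symmetric_run hu hw hq hc (by omega)⟩

lemma exists_isCnStdPal_of_consecutive_runs (hu : u ≠ []) {al bl ar br : ℕ}
    (hw : IsPalOn w i j) (hl : IsRun γ w u al bl) (hr : IsRun γ w u ar br) (hi : i ≤ bl)
    (hlt : bl < ar) (hc : bl + ar = i + j)
    (hfree : ∀ a b, IsRun γ w u a b → a ≤ j → i ≤ b → b ≤ bl ∨ ar ≤ a) :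
    ∃ m₁ m₂, IsCnStdPal γ w u i j m₁ m₂ := by
  have hgap := hl.add_four_le hu hr hlt
  refine ⟨_, _, isCnStdPal_of_rpoDom (p := bl + 1) (q := ar - 1) hw (by omega) (by omega)
    (by omega) fun m hm hm' => ⟨by omega, fun a b hab hcov => ?_⟩⟩
  have := hab.1
  rcases hfree a b hab (by omega) (by omega) with hb | ha <;> omega

lemma exists_isCnStdPal_of_no_straddle (hu : u ≠ []) {x y : ℕ} (hw : IsPalOn w i j)
    (h : IsRun γ w u x y) (hx : i + u.length + 2 ≤ x) (hy : y + u.length + 2 ≤ j)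
    (hside : ∀ a b, IsRun γ w u a b → a ≤ j → i ≤ b → 2 * a ≤ i + j → 2 * b < i + j) :
    ∃ m₁ m₂, IsCnStdPal γ w u i j m₁ m₂ := by
  classical
  have hside' : ∀ a b, IsRun γ w u a b → a ≤ j → i ≤ b → 2 * b < i + j ∨ i + j < 2 * a :=
    fun a b hab ha hb => (le_or_gt (2 * a) (i + j)).imp (hside a b hab ha hb) id
  -- replacing the run by its mirror image if necessary, it lies left of the centre
  obtain ⟨x, y, h, hx, hy, hyc⟩ : ∃ x y, IsRun γ w u x y ∧ i + u.length + 2 ≤ x ∧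
      y + u.length + 2 ≤ j ∧ 2 * y < i + j := by
    have := h.1
    rcases hside' x y h (by omega) (by omega) with hc | hc
    · exact ⟨x, y, h, hx, hy, hc⟩
    · exact ⟨_, _, h.reflect hw hx hy, by omega, by omega, by omega⟩
  have := h.1
  have hmir := h.reflect hw hx hy
  -- `(al, bl)` is the last run left of the centre, `(ar, br)` the first one right of it
  let IsLeftEnd (b : ℕ) := ∃ a, IsRun γ w u a b ∧ i ≤ b ∧ 2 * b < i + j
  let IsRightStart (a : ℕ) := ∃ b, IsRun γ w u a b ∧ a ≤ j ∧ i + j < 2 * a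
  have hright : ∃ a, IsRightStart a := ⟨_, _, hmir, by omega, by omega⟩
  obtain ⟨al, hl, hibl, hblc⟩ :=
    Nat.findGreatest_spec (P := IsLeftEnd) (show y ≤ i + j by omega) ⟨x, h, by omega, hyc⟩
  obtain ⟨br, hr, harj, harc⟩ := Nat.find_spec hright
  set bl := Nat.findGreatest IsLeftEnd (i + j)
  set ar := Nat.find hright
  have hbl_max : ∀ a b, IsRun γ w u a b → i ≤ b → 2 * b < i + j → b ≤ bl :=
    fun a b hab hb hbc => Nat.le_findGreatest (by omega) ⟨a, hab, hb, hbc⟩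
  have har_min : ∀ a b, IsRun γ w u a b → a ≤ j → i + j < 2 * a → ar ≤ a :=
    fun a b hab ha hac => Nat.find_min' hright ⟨b, hab, ha, hac⟩
  have := hl.1
  have := hr.1
  -- both inherit the margins of `(x, y)` and its mirror image, so both can be reflected
  have hxal : x ≤ al := (h.le_iff_le hu hl).2 (hbl_max _ _ h (by omega) hyc)
  have hbr : br ≤ i + j - x :=
    (hr.le_iff_le hu hmir).1 (har_min _ _ hmir (by omega) (by omega))
  have har_le : ar ≤ i + j - bl :=
    har_min _ _ (hl.reflect hw (by omega) (by omega)) (by omega) (by omega)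
  have hbl_ge : i + j - ar ≤ bl :=
    hbl_max _ _ (hr.reflect hw (by omega) (by omega)) (by omega) (by omega)
  refine exists_isCnStdPal_of_consecutive_runs hu hw hl hr hibl (by omega) (by omega)
    fun a b hab ha hb => ?_
  rcases hside' a b hab ha hb with hc | hc
  · exact Or.inl (hbl_max a b hab hb hc)
  · exact Or.inr (har_min a b hab ha hc)

lemma exists_isCnStdPal_of_isRun (hu : u ≠ []) {x y : ℕ} (hw : IsPalOn w i j)
    (h : IsRun γ w u x y) (hx : i + u.length + 2 ≤ x) (hy : y + u.length + 2 ≤ j) :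
    ∃ m₁ m₂, IsCnStdPal γ w u i j m₁ m₂ := by
  by_cases hstr : ∃ a b, IsRun γ w u a b ∧ a ≤ j ∧ i ≤ b ∧ 2 * a ≤ i + j ∧ i + j ≤ 2 * b
  · obtain ⟨a, b, hab, ha, hb, hca, hcb⟩ := hstr
    exact exists_isCnStdPal_of_straddle hu hw h hx hy hab ha hb hca hcb
  · push Not at hstr
    exact exists_isCnStdPal_of_no_straddle hu hw h hx hy hstr

lemma exists_isRun_margin_of_two_lt_card (hu : u ≠ []) {S : Finset (ℕ × ℕ)}
    (hS : ∀ p ∈ S, IsRun γ w u p.1 p.2 ∧ i ≤ p.1 ∧ p.2 ≤ j) (hcard : 2 < S.card) :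
    ∃ a b, IsRun γ w u a b ∧ i + u.length + 2 ≤ a ∧ b + u.length + 2 ≤ j := by
  obtain ⟨p₁, h₁, p₂, h₂, p₃, h₃, h₁₂, h₁₃, h₂₃⟩ := Finset.two_lt_card.1 hcard
  obtain ⟨r₁, hi₁, hj₁⟩ := hS p₁ h₁
  obtain ⟨r₂, hi₂, hj₂⟩ := hS p₂ h₂
  obtain ⟨r₃, hi₃, hj₃⟩ := hS p₃ h₃
  have := r₁.1
  have := r₂.1
  have := r₃.1
  -- the middle one of three separated runs has the margins
  rcases r₁.separated hu r₂ h₁₂ with s₁₂ | s₁₂ <;> rcases r₁.separated hu r₃ h₁₃ with s₁₃ | s₁₃ <;>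
    rcases r₂.separated hu r₃ h₂₃ with s₂₃ | s₂₃ <;>
    first
    | omega
    | exact ⟨_, _, r₁, by omega, by omega⟩
    | exact ⟨_, _, r₂, by omega, by omega⟩
    | exact ⟨_, _, r₃, by omega, by omega⟩

end CenteredPalindromes

theorem no_cstdpal_run_bound_general {α : Type*} (γ : ℕ)
    (w : ℕ → α) (u : List α) (hu : InPi γ w u)
    (i j : ℕ)
    (hpal : (Subword w i j).reverse = Subword w i j)
    (hempty : ∀ m1 m2, ¬ IsCnStdPal γ w u i j m1 m2) :
    RunCountLe γ w u i j 2 := by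
  intro S hS
  by_contra! hcard
  obtain ⟨x, y, h, hx, hy⟩ := exists_isRun_margin_of_two_lt_card hu.1.1 hS hcard
  obtain ⟨m₁, m₂, hm⟩ := exists_isCnStdPal_of_isRun hu.1.1 (isPalOn_of_reverse_eq hpal) h hx hy
  exact hempty m₁ m₂ hm

/-- a palindrome with no centered standard palindrome contains at
most two runs. -/
theorem no_cstdpal_run_bound {α : Type*} (γ : ℕ) (hγ : 3 ≤ γ)
    (w : ℕ → α) (u : List α) (hw : ¬ UltimatelyPeriodic w) (hu : InPi γ w u)
    (i j : ℕ) (hij : i ≤ j)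
    (hpal : (Subword w i j).reverse = Subword w i j)
    (hempty : ∀ m1 m2, ¬ IsCnStdPal γ w u i j m1 m2) :
    RunCountLe γ w u i j 2 :=
  no_cstdpal_run_bound_general γ w u hu i j hpal hempty
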